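/- arXiv:2305.07259 — 3 statements merged into one kernel-verified Lean document; each statement's English description precedes it below -/
import Mathlib

section
/- (Lemma: left-consistency, case i ∉ H') Let T* join T' and T'' by edge (v, v_j), S = S' ∪ S''. Suppose every vertex of color i in T' is consistent in (T', S'), and r'_i := max over w ∈ V(T')∩C_i of (dist(w,S') − dist(w,v)) satisfies r'_i ≤ dist(v_j, S'') + 1. Then every vertex of color i in V(T') is consistent in (T*, S). -/
/-- Distance from a vertex to a set of vertices (∞ if the set is empty). -/
noncomputable def setDist {V : Type*} (G : SimpleGraph V) (u : V) (S : Set V) : ℕ∞ :=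
  ⨅ x ∈ S, G.edist u x

/-- The set of nearest neighbors of `u` in `S`. -/
def nearest {V : Type*} (G : SimpleGraph V) (S : Set V) (u : V) : Set V :=
  {x ∈ S | G.edist u x = setDist G u S}

/-- A vertex `u` is consistent in `(G, S)` if some nearest neighbor of `u` in `S`
has the same color as `u`. -/
def ConsistentAt {V : Type*} {k : ℕ} (G : SimpleGraph V) (c : V → Fin k) (S : Set V)
    (u : V) : Prop :=
  ∃ x ∈ nearest G S u, c x = c u

/-- `S` is a consistent subset of the vertex-colored graph `(G, c)`. -/
def Consistent {V : Type*} {k : ℕ} (G : SimpleGraph V) (c : V → Fin k) (S : Set V) : Prop :=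
  ∀ u, ConsistentAt G c S u

/-! A nearest neighbour of `w` in `S'` stays nearest in `S' ∪ S''` as long as `S''` is no
closer to `w` than `S'`. Every path from `w` to `S''` crosses the edge `{v, v_j}`, so
`dist(w, S'') = dist(w, v) + 1 + dist(v_j, S'')`, and the bound on `r'_i` says exactly that
this is at least `dist(w, S')`. -/

section SetDist

variable {V : Type*} (G : SimpleGraph V)

theorem setDist_le_edist {u x : V} {S : Set V} (hx : x ∈ S) : setDist G u S ≤ G.edist u x :=
  iInf₂_le x hx

theorem setDist_union (u : V) (S T : Set V) :
    setDist G u (S ∪ T) = min (setDist G u S) (setDist G u T) :=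
  iInf_union

theorem add_setDist_le_setDist_of_edist_eq {u v : V} {T : Set V} {d : ℕ∞}
    (h : ∀ x ∈ T, G.edist u x = d + G.edist v x) : d + setDist G v T ≤ setDist G u T :=
  le_iInf₂ fun x hx => h x hx ▸ add_le_add_right (setDist_le_edist G hx) d

theorem ConsistentAt.union_of_setDist_le {k : ℕ} {c : V → Fin k} {S T : Set V} {u : V}
    (hu : ConsistentAt G c S u) (hST : setDist G u S ≤ setDist G u T) :
    ConsistentAt G c (S ∪ T) u := by
  obtain ⟨x, ⟨hxS, hx⟩, hcx⟩ := hu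
  refine ⟨x, ⟨Or.inl hxS, ?_⟩, hcx⟩
  rw [setDist_union, min_eq_left hST, hx]

end SetDist

theorem left_consistent_not_inconsistent_general {V : Type*} {k : ℕ}
    (G : SimpleGraph V) (c : V → Fin k) (i : Fin k) (A B : Set V) (v vj : V)
    (hlaw : ∀ w ∈ A, ∀ x ∈ B, G.edist w x = G.edist w v + 1 + G.edist vj x)
    (S' S'' : Set V) (hS''B : S'' ⊆ B)
    (hcons : ∀ w ∈ A, c w = i → ConsistentAt G c S' w)
    (hr : ∀ w ∈ A, c w = i →
      setDist G w S' - G.edist w v ≤ setDist G vj S'' + 1) :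
    ∀ w ∈ A, c w = i → ConsistentAt G c (S' ∪ S'') w := by
  intro w hw hcw
  refine (hcons w hw hcw).union_of_setDist_le G ?_
  calc setDist G w S' ≤ setDist G vj S'' + 1 + G.edist w v := tsub_le_iff_right.mp (hr w hw hcw)
    _ = G.edist w v + 1 + setDist G vj S'' := by ring
    _ ≤ setDist G w S'' :=
      add_setDist_le_setDist_of_edist_eq G fun x hx => hlaw w hw x (hS''B hx)

/-- Left consistency, case `i ∉ H'`: if every vertex of color `i` in `T'` is
consistent in `(T', S')` and `r'_i ≤ ℓ'' + 1`, then every vertex of color `i`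
in `V(T')` is consistent in `(T*, S' ∪ S'')`. -/
theorem left_consistent_not_inconsistent {V : Type*} {k : ℕ}
    (G : SimpleGraph V) (c : V → Fin k) (i : Fin k) (A B : Set V) (v vj : V)
    (hconn : G.Connected)
    (hv : v ∈ A) (hvj : vj ∈ B) (hdisj : Disjoint A B) (hcover : A ∪ B = Set.univ)
    (hlaw : ∀ w ∈ A, ∀ x ∈ B, G.edist w x = G.edist w v + 1 + G.edist vj x)
    (S' S'' : Set V) (hS'A : S' ⊆ A) (hS''B : S'' ⊆ B)
    (hCne : (A ∩ {w | c w = i}).Nonempty) (hS' : S'.Nonempty)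
    (hcons : ∀ w ∈ A, c w = i → ConsistentAt G c S' w)
    (hr : ∀ w ∈ A, c w = i →
      setDist G w S' - G.edist w v ≤ setDist G vj S'' + 1) :
    ∀ w ∈ A, c w = i → ConsistentAt G c (S' ∪ S'') w :=
  left_consistent_not_inconsistent_general G c i A B v vj hlaw S' S'' hS''B hcons hr
end

section
/- (Lemma: left-consistency, case i ∈ H') Let T* join T' and T'' by edge (v, v_j), S = S' ∪ S''. Suppose w ∈ V(T')∩C_i is inconsistent in (T', S'), the set N(S'', v_j) of nearest neighbors of v_j in S'' (within T'') contains a vertex of color i, and dist(w, S') − dist(w, v) ≥ dist(v_j, S'') + 1. Then w is consistent in (T*, S). -/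
namespace ENat

-- `0 < a` excludes `c = ⊤`, where the truncated `b - ⊤ = 0`.
theorem add_le_of_le_tsub_of_pos {a b c : ℕ∞} (ha : 0 < a) (h : a ≤ b - c) : c + a ≤ b :=
  have hcb : c < b := tsub_pos_iff_lt.mp (ha.trans_le h)
  ((addLECancellable_of_ne_top hcb.ne_top).le_tsub_iff_left hcb.le).mp h

end ENat

section setDist

variable {V : Type*} (G : SimpleGraph V)

theorem nearest_subset_nearest_union_of_le {u : V} {S T : Set V}
    (h : setDist G u T ≤ setDist G u S) : nearest G T u ⊆ nearest G (S ∪ T) u := by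
  rintro x ⟨hxT, hx⟩
  exact ⟨Or.inr hxT, by rw [hx, setDist_union, min_eq_right h]⟩

variable {G}

theorem setDist_eq_add_of_forall_edist_eq {w u : V} {S : Set V} {a : ℕ∞}
    (h : ∀ y ∈ S, G.edist w y = a + G.edist u y) : setDist G w S = a + setDist G u S := by
  rw [setDist, setDist, ENat.add_iInf₂]
  exact iInf_congr fun y ↦ iInf_congr (h y)

theorem nearest_subset_of_forall_edist_eq {w u : V} {S : Set V} {a : ℕ∞}
    (h : ∀ y ∈ S, G.edist w y = a + G.edist u y) : nearest G S u ⊆ nearest G S w := by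
  rintro x ⟨hxS, hx⟩
  exact ⟨hxS, by rw [h x hxS, hx, setDist_eq_add_of_forall_edist_eq h]⟩

end setDist

theorem left_consistent_inconsistent_case_general {V : Type*} {k : ℕ}
    (G : SimpleGraph V) (c : V → Fin k) (i : Fin k) (A B : Set V) (v vj : V)
    (hlaw : ∀ w ∈ A, ∀ x ∈ B, G.edist w x = G.edist w v + 1 + G.edist vj x)
    (S' S'' : Set V) (hS''B : S'' ⊆ B)
    (w : V) (hw : w ∈ A) (hci : c w = i)
    (hL : ∃ x ∈ nearest G S'' vj, c x = i)
    (hr : setDist G vj S'' + 1 ≤ setDist G w S' - G.edist w v) :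
    ConsistentAt G c (S' ∪ S'') w := by
  obtain ⟨x, hx, hcx⟩ := hL
  have hthrough : ∀ y ∈ S'', G.edist w y = G.edist w v + 1 + G.edist vj y :=
    fun y hy ↦ hlaw w hw y (hS''B hy)
  have hS''_le_S' : setDist G w S'' ≤ setDist G w S' := by
    rw [setDist_eq_add_of_forall_edist_eq hthrough, add_right_comm, add_assoc]
    exact ENat.add_le_of_le_tsub_of_pos (pos_of_ne_zero (by simp)) hr
  exact ⟨x, nearest_subset_nearest_union_of_le G hS''_le_S'
    (nearest_subset_of_forall_edist_eq hthrough hx), hcx.trans hci.symm⟩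

/-- Left consistency, case `i ∈ H'`: if `w` of color `i` is inconsistent in
`(T', S')`, `N(S'', v_j)` contains a vertex of color `i`, and
`dist(w, S') − dist(w, v) ≥ ℓ'' + 1`, then `w` is consistent in `(T*, S' ∪ S'')`. -/
theorem left_consistent_inconsistent_case {V : Type*} {k : ℕ}
    (G : SimpleGraph V) (c : V → Fin k) (i : Fin k) (A B : Set V) (v vj : V)
    (hconn : G.Connected)
    (hv : v ∈ A) (hvj : vj ∈ B) (hdisj : Disjoint A B) (hcover : A ∪ B = Set.univ)
    (hlaw : ∀ w ∈ A, ∀ x ∈ B, G.edist w x = G.edist w v + 1 + G.edist vj x)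
    (S' S'' : Set V) (hS'A : S' ⊆ A) (hS''B : S'' ⊆ B)
    (hS' : S'.Nonempty) (hS'' : S''.Nonempty)
    (w : V) (hw : w ∈ A) (hci : c w = i)
    (hinc : ¬ ConsistentAt G c S' w)
    (hL : ∃ x ∈ nearest G S'' vj, c x = i)
    (hr : setDist G vj S'' + 1 ≤ setDist G w S' - G.edist w v) :
    ConsistentAt G c (S' ∪ S'') w :=
  left_consistent_inconsistent_case_general G c i A B v vj hlaw S' S'' hS''B w hw hci hL hr
end

section
/- (Left-inconsistency, case i ∉ H') Let T* join T' and T'' by edge (v, v_j), S = S' ∪ S'' with S'' nonempty. Suppose there exists w ∈ V(T')∩C_i with dist(w, S') − dist(w, v) > dist(v_j, S'') + 1, and N(S'', v_j) contains no vertex of color i. Then color i is inconsistent in (T*, S), i.e., some vertex of color i in T* has no same-colored nearest neighbor in S. -/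
/-!
Let `w ∈ A` be the far vertex of colour `i`. Every path from `w` into `S''` crosses the edge
`{v, v_j}`, so distances from `w` to `S''` are those from `v_j` shifted by the constant
`d(w, v) + 1`. Hence `d(w, S'') = d(w, v) + 1 + d(v_j, S'') < d(w, S')`, the nearest neighbours
of `w` in `S' ∪ S''` are exactly those of `v_j` in `S''`, and none of them has colour `i`.
-/

namespace SimpleGraph

variable {V : Type*} (G : SimpleGraph V)

lemma setDist_le_edist (u : V) {S : Set V} {x : V} (hx : x ∈ S) :
    setDist G u S ≤ G.edist u x :=
  iInf₂_le x hx

lemma setDist_union (u : V) (S T : Set V) :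
    setDist G u (S ∪ T) = setDist G u S ⊓ setDist G u T :=
  iInf_union

lemma nearest_union_of_setDist_lt {u : V} {S T : Set V} (h : setDist G u T < setDist G u S) :
    nearest G (S ∪ T) u = nearest G T u := by
  ext x
  simp only [nearest, setDist_union, inf_eq_right.mpr h.le, Set.mem_ofPred_eq, Set.mem_union]
  constructor
  · rintro ⟨hxS | hxT, hx⟩
    · exact absurd (hx ▸ setDist_le_edist G u hxS) h.not_ge
    · exact ⟨hxT, hx⟩
  · exact fun ⟨hxT, hx⟩ ↦ ⟨Or.inr hxT, hx⟩

section Shift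

variable {G} {u u' : V} {S : Set V} {D : ℕ∞}

lemma setDist_eq_add_of_edist_eq_add (h : ∀ x ∈ S, G.edist u x = D + G.edist u' x) :
    setDist G u S = D + setDist G u' S := by
  rw [setDist, setDist, ENat.add_iInf₂]
  exact iInf_congr fun x ↦ iInf_congr (h x)

lemma nearest_eq_of_edist_eq_add (hD : D ≠ ⊤) (h : ∀ x ∈ S, G.edist u x = D + G.edist u' x) :
    nearest G S u = nearest G S u' := by
  ext x
  simp only [nearest, Set.mem_ofPred_eq, and_congr_right_iff]
  intro hx
  rw [h x hx, setDist_eq_add_of_edist_eq_add h]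
  exact add_right_inj_of_ne_top hD

end Shift

end SimpleGraph

open SimpleGraph in
theorem left_inconsistent_not_H_general {V : Type*} {k : ℕ}
    (G : SimpleGraph V) (c : V → Fin k) (i : Fin k) (A B : Set V) (v vj : V)
    (hlaw : ∀ w ∈ A, ∀ x ∈ B, G.edist w x = G.edist w v + 1 + G.edist vj x)
    (S' S'' : Set V) (hS''B : S'' ⊆ B)
    (hfar : ∃ w ∈ A, c w = i ∧
      setDist G vj S'' + 1 < setDist G w S' - G.edist w v)
    (hL : ¬ ∃ x ∈ nearest G S'' vj, c x = i) :
    ∃ u : V, c u = i ∧ ¬ ConsistentAt G c (S' ∪ S'') u := by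
  obtain ⟨w, hwA, hwc, hfar⟩ := hfar
  have hshift : ∀ x ∈ S'', G.edist w x = G.edist w v + 1 + G.edist vj x :=
    fun x hx ↦ hlaw w hwA x (hS''B hx)
  -- `a - ⊤ = 0` in `ℕ∞`, so `hfar` forces `d(w, v)` to be finite.
  have hfin : G.edist w v + 1 ≠ ⊤ := by
    refine ENat.add_eq_top.not.mpr (not_or.mpr ⟨fun htop ↦ ?_, ENat.one_ne_top⟩)
    rw [htop, ENat.sub_top] at hfar
    exact not_lt_zero hfar
  have hcloser : setDist G w S'' < setDist G w S' := by
    rw [setDist_eq_add_of_edist_eq_add hshift, add_assoc, add_comm 1]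
    exact lt_tsub_iff_left.mp hfar
  refine ⟨w, hwc, fun ⟨x, hx, hxc⟩ ↦ hL ⟨x, ?_, hxc.trans hwc⟩⟩
  rwa [nearest_union_of_setDist_lt G hcloser, nearest_eq_of_edist_eq_add hfin hshift] at hx

/-- Left inconsistency, case `i ∉ H'`: if some `w ∈ V(T') ∩ C_i` has
`dist(w,S') − dist(w,v) > ℓ'' + 1` and `N(S'', v_j)` has no vertex of color `i`,
then color `i` is inconsistent in `(T*, S' ∪ S'')`. -/
theorem left_inconsistent_not_H {V : Type*} {k : ℕ}
    (G : SimpleGraph V) (c : V → Fin k) (i : Fin k) (A B : Set V) (v vj : V)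
    (hconn : G.Connected)
    (hv : v ∈ A) (hvj : vj ∈ B) (hdisj : Disjoint A B) (hcover : A ∪ B = Set.univ)
    (hlaw : ∀ w ∈ A, ∀ x ∈ B, G.edist w x = G.edist w v + 1 + G.edist vj x)
    (S' S'' : Set V) (hS'A : S' ⊆ A) (hS''B : S'' ⊆ B) (hS'' : S''.Nonempty)
    (hfar : ∃ w ∈ A, c w = i ∧
      setDist G vj S'' + 1 < setDist G w S' - G.edist w v)
    (hL : ¬ ∃ x ∈ nearest G S'' vj, c x = i) :
    ∃ u : V, c u = i ∧ ¬ ConsistentAt G c (S' ∪ S'') u :=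
  left_inconsistent_not_H_general G c i A B v vj hlaw S' S'' hS''B hfar hL
end
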